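/- (Policy improvement on the augmented MDP.) Let π^core be a policy core and π a mixed policy built from π^core and some policy inertia controller μ : S × A → [0,1]. If for every state s and previous action a' the one-step expected value satisfies E_{a ~ π(·|s,a')}[Q^{π^core}(s,a)] ≥ V^{π^core}(s), then the value of the mixed policy on the augmented MDP dominates the value of the policy core: V^π(s,a') ≥ V^{π^core}(s) for every state s and previous action a'. -/

import Mathlib

open scoped BigOperators

noncomputable section

/-- A probability distribution on a finite type, given as a nonnegative
function summing to one. -/
def IsDist {X : Type*} [Fintype X] (d : X → ℝ) : Prop :=
  (∀ x, 0 ≤ d x) ∧ ∑ x, d x = 1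

/-- A transition kernel: for each state-action pair, a distribution on states. -/
def IsKernel {S A : Type*} [Fintype S] (P : S → A → S → ℝ) : Prop :=
  ∀ s a, IsDist (P s a)

/-- A (stationary) stochastic policy: for each state, a distribution on actions. -/
def IsPolicy {S A : Type*} [Fintype A] (π : S → A → ℝ) : Prop :=
  ∀ s, IsDist (π s)

/-- The state-action distribution at time `t` of the trajectory generated by
policy `π` in the MDP with transition kernel `P`, started from the initial
state-action distribution `d0`. -/
def saDist {S A : Type*} [Fintype S] [Fintype A]
    (P : S → A → S → ℝ) (π : S → A → ℝ) (d0 : S × A → ℝ) : ℕ → S × A → ℝ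
  | 0 => d0
  | t + 1 => fun q => ∑ p : S × A, saDist P π d0 t p * P p.1 p.2 q.1 * π q.1 q.2

/-- The state-action value function `Q^π(s,a)`:
expected discounted return starting at state `s`, taking action `a` first and
following `π` afterwards. -/
def Qval {S A : Type*} [Fintype S] [Fintype A] [DecidableEq S] [DecidableEq A]
    (P : S → A → S → ℝ) (r : S → A → ℝ) (γ : ℝ) (π : S → A → ℝ) (s : S) (a : A) : ℝ :=
  ∑' t : ℕ, γ ^ t *
    ∑ q : S × A, saDist P π (fun p => if p = (s, a) then 1 else 0) t q * r q.1 q.2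

/-- The state value function `V^π(s)`. -/
def Vval {S A : Type*} [Fintype S] [Fintype A] [DecidableEq S] [DecidableEq A]
    (P : S → A → S → ℝ) (r : S → A → ℝ) (γ : ℝ) (π : S → A → ℝ) (s : S) : ℝ :=
  ∑ a : A, π s a * Qval P r γ π s a

/-- The advantage function `A^π(s,a) = Q^π(s,a) − V^π(s)`. -/
def Adv {S A : Type*} [Fintype S] [Fintype A] [DecidableEq S] [DecidableEq A]
    (P : S → A → S → ℝ) (r : S → A → ℝ) (γ : ℝ) (π : S → A → ℝ) (s : S) (a : A) : ℝ :=
  Qval P r γ π s a - Vval P r γ π s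

/-- Transition kernel of the augmented MDP whose states are pairs
`(state, previously executed action)` : `((s,a'),a) ↦ (s',a)` with `s' ~ P(·|s,a)`. -/
def augP {S A : Type*} [DecidableEq A] (P : S → A → S → ℝ) :
    S × A → A → S × A → ℝ :=
  fun x a y => if y.2 = a then P x.1 a y.1 else 0

/-- Reward of the augmented MDP: `r((s,a'),a) = r(s,a)`. -/
def augR {S A : Type*} (r : S → A → ℝ) : S × A → A → ℝ :=
  fun x a => r x.1 a

/-- A policy on the base MDP viewed as a policy on the augmented MDP. -/
def liftPolicy {S A : Type*} (π : S → A → ℝ) : S × A → A → ℝ :=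
  fun x a => π x.1 a

/-- The mixed (PIC-augmented) policy
`π(·|s,a') = μ(s,a')·δ_{a'} + (1−μ(s,a'))·π^core(·|s)`,
a stationary policy on the augmented MDP. -/
def mixed {S A : Type*} [DecidableEq A] (μ : S → A → ℝ) (πc : S → A → ℝ) :
    S × A → A → ℝ :=
  fun x a => μ x.1 x.2 * (if a = x.2 then 1 else 0) + (1 - μ x.1 x.2) * πc x.1 a


/-! The value of the policy core, read as a function `W (s, a') := V^{πc}(s)` on augmented states,
is a subsolution of the Bellman equation of the mixed policy: by the Bellman equation for
`Q^{πc}`, the hypothesis says exactly `W ≤ T^π W`. The Bellman operator `T^π` is monotone and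
scales differences by `γ`, so at a minimiser of `V^π - W` the minimum `m` satisfies `γ m ≤ m`,
whence `m ≥ 0` and `W ≤ V^π`. -/

section Distributions

variable {X : Type*} [Fintype X] {d : X → ℝ}

theorem IsDist.le_one (hd : IsDist d) (x : X) : d x ≤ 1 :=
  hd.2 ▸ Finset.single_le_sum (fun i _ => hd.1 i) (Finset.mem_univ x)

theorem IsDist.le_sum_mul (hd : IsDist d) {c : ℝ} {f : X → ℝ} (hf : ∀ x, c ≤ f x) :
    c ≤ ∑ x, d x * f x :=
  calc c = ∑ x, d x * c := by rw [← Finset.sum_mul, hd.2, one_mul]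
    _ ≤ ∑ x, d x * f x :=
      Finset.sum_le_sum fun x _ => mul_le_mul_of_nonneg_left (hf x) (hd.1 x)

theorem isDist_indicator_eq [DecidableEq X] (x₀ : X) :
    IsDist (fun x => if x = x₀ then (1 : ℝ) else 0) :=
  ⟨fun x => by positivity, by simp⟩

end Distributions

section StateActionDistribution

variable {S A : Type*} [Fintype S] [Fintype A] (P : S → A → S → ℝ) (π : S → A → ℝ)

def saStep (d : S × A → ℝ) : S × A → ℝ :=
  fun q => ∑ p : S × A, d p * P p.1 p.2 q.1 * π q.1 q.2

theorem saDist_succ (d : S × A → ℝ) (t : ℕ) :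
    saDist P π d (t + 1) = saStep P π (saDist P π d t) := rfl

theorem saDist_succ' (d : S × A → ℝ) (t : ℕ) :
    saDist P π d (t + 1) = saDist P π (saStep P π d) t := by
  induction t with
  | zero => rfl
  | succ t ih => rw [saDist_succ, ih, ← saDist_succ]

theorem saDist_eq_sum_indicator [DecidableEq S] [DecidableEq A] (d : S × A → ℝ) (t : ℕ)
    (q : S × A) :
    saDist P π d t q = ∑ p, d p * saDist P π (fun x => if x = p then 1 else 0) t q := by
  induction t generalizing q with
  | zero => simp [saDist]
  | succ t ih =>
    simp only [saDist_succ, saStep, ih, Finset.sum_mul, Finset.mul_sum]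
    rw [Finset.sum_comm]
    exact Finset.sum_congr rfl fun _ _ => Finset.sum_congr rfl fun _ _ => by ring

theorem saDist_indicator_succ [DecidableEq S] [DecidableEq A] (s : S) (a : A) (t : ℕ)
    (q : S × A) :
    saDist P π (fun p => if p = (s, a) then 1 else 0) (t + 1) q =
      ∑ p, P s a p.1 * π p.1 p.2 * saDist P π (fun x => if x = p then 1 else 0) t q := by
  rw [saDist_succ', saDist_eq_sum_indicator]
  simp [saStep, ite_mul]

variable {P π}

theorem IsDist.saStep (hP : IsKernel P) (hπ : IsPolicy π) {d : S × A → ℝ} (hd : IsDist d) :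
    IsDist (saStep P π d) := by
  refine ⟨fun q => Finset.sum_nonneg fun p _ => ?_, ?_⟩
  · have := (hP p.1 p.2).1 q.1
    have := (hπ q.1).1 q.2
    have := hd.1 p
    positivity
  · simp only [_root_.saStep]
    rw [Finset.sum_comm, ← hd.2]
    refine Finset.sum_congr rfl fun p _ => ?_
    simp only [Fintype.sum_prod_type, ← Finset.mul_sum, (hπ _).2, mul_one, (hP p.1 p.2).2]

theorem IsDist.saDist (hP : IsKernel P) (hπ : IsPolicy π) {d : S × A → ℝ} (hd : IsDist d)
    (t : ℕ) : IsDist (saDist P π d t) := by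
  induction t with
  | zero => exact hd
  | succ t ih => exact ih.saStep hP hπ

theorem summable_discounted_reward (r : S → A → ℝ) {γ : ℝ} (hγ : |γ| < 1) (hP : IsKernel P)
    (hπ : IsPolicy π) {d : S × A → ℝ} (hd : IsDist d) :
    Summable fun t : ℕ => γ ^ t * ∑ q, saDist P π d t q * r q.1 q.2 := by
  refine Summable.of_norm_bounded ((summable_geometric_of_lt_one (abs_nonneg γ) hγ).mul_right
    (∑ q : S × A, |r q.1 q.2|)) fun t => ?_
  have hdt := hd.saDist hP hπ t
  rw [norm_mul, norm_pow, Real.norm_eq_abs, Real.norm_eq_abs]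
  refine mul_le_mul_of_nonneg_left ?_ (pow_nonneg (abs_nonneg γ) t)
  calc |∑ q, saDist P π d t q * r q.1 q.2| ≤ ∑ q, |saDist P π d t q * r q.1 q.2| :=
        Finset.abs_sum_le_sum_abs _ _
    _ ≤ ∑ q : S × A, |r q.1 q.2| := Finset.sum_le_sum fun q _ => by
        rw [abs_mul, abs_of_nonneg (hdt.1 q)]
        exact mul_le_of_le_one_left (abs_nonneg _) (hdt.le_one q)

end StateActionDistribution

def bellmanOp {X A : Type*} [Fintype X] [Fintype A] (P : X → A → X → ℝ) (r : X → A → ℝ) (γ : ℝ)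
    (π : X → A → ℝ) (W : X → ℝ) (x : X) : ℝ :=
  ∑ a, π x a * (r x a + γ * ∑ y, P x a y * W y)

theorem bellmanOp_sub_bellmanOp {X A : Type*} [Fintype X] [Fintype A] (P : X → A → X → ℝ)
    (r : X → A → ℝ) (γ : ℝ) (π : X → A → ℝ) (V W : X → ℝ) (x : X) :
    bellmanOp P r γ π V x - bellmanOp P r γ π W x =
      γ * ∑ a, π x a * ∑ y, P x a y * (V y - W y) := by
  rw [bellmanOp, bellmanOp, ← Finset.sum_sub_distrib, Finset.mul_sum]
  refine Finset.sum_congr rfl fun a _ => ?_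
  simp only [mul_sub, Finset.sum_sub_distrib]
  ring

section Bellman

variable {S A : Type*} [Fintype S] [Fintype A] [DecidableEq S] [DecidableEq A]
  {P : S → A → S → ℝ} {π : S → A → ℝ} (r : S → A → ℝ) {γ : ℝ}

theorem Qval_eq_reward_add (hγ : |γ| < 1) (hP : IsKernel P) (hπ : IsPolicy π) (s : S) (a : A) :
    Qval P r γ π s a = r s a + γ * ∑ s', P s a s' * Vval P r γ π s' := by
  have hsum (p : S × A) := summable_discounted_reward r hγ hP hπ (isDist_indicator_eq p)
  rw [Qval, (hsum (s, a)).tsum_eq_zero_add]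
  congr 1
  · simp [saDist, ite_mul]
  calc ∑' t : ℕ, γ ^ (t + 1) * ∑ q,
        saDist P π (fun p => if p = (s, a) then 1 else 0) (t + 1) q * r q.1 q.2
      = ∑' t : ℕ, ∑ p : S × A, P s a p.1 * π p.1 p.2 * γ *
          (γ ^ t * ∑ q, saDist P π (fun x => if x = p then 1 else 0) t q * r q.1 q.2) := by
        congr with t
        simp only [saDist_indicator_succ, Finset.sum_mul, Finset.mul_sum]
        rw [Finset.sum_comm]
        exact Finset.sum_congr rfl fun _ _ => Finset.sum_congr rfl fun _ _ => by ring
    _ = ∑ p : S × A, P s a p.1 * π p.1 p.2 * γ * Qval P r γ π p.1 p.2 := by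
        rw [Summable.tsum_finsetSum fun p _ => (hsum p).mul_left _]
        simp only [tsum_mul_left, Qval]
    _ = γ * ∑ s', P s a s' * Vval P r γ π s' := by
        simp only [Vval, Fintype.sum_prod_type, Finset.mul_sum]
        exact Finset.sum_congr rfl fun _ _ => Finset.sum_congr rfl fun _ _ => by ring

theorem Vval_eq_bellmanOp (hγ : |γ| < 1) (hP : IsKernel P) (hπ : IsPolicy π) (s : S) :
    Vval P r γ π s = bellmanOp P r γ π (Vval P r γ π) s :=
  Finset.sum_congr rfl fun a _ => by rw [Qval_eq_reward_add r hγ hP hπ]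

theorem le_Vval_of_le_bellmanOp (hγ0 : 0 ≤ γ) (hγ1 : γ < 1) (hP : IsKernel P) (hπ : IsPolicy π)
    {W : S → ℝ} (hW : ∀ s, W s ≤ bellmanOp P r γ π W s) (s : S) : W s ≤ Vval P r γ π s := by
  set V := Vval P r γ π
  obtain ⟨s₀, -, hmin⟩ :=
    Finset.exists_min_image Finset.univ (fun s => V s - W s) ⟨s, Finset.mem_univ s⟩
  have hgap : γ * (V s₀ - W s₀) ≤ V s₀ - W s₀ :=
    calc γ * (V s₀ - W s₀) ≤ γ * ∑ a, π s₀ a * ∑ s', P s₀ a s' * (V s' - W s') :=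
          mul_le_mul_of_nonneg_left ((hπ s₀).le_sum_mul fun a =>
            (hP s₀ a).le_sum_mul fun s' => hmin s' (Finset.mem_univ s')) hγ0
      _ = bellmanOp P r γ π V s₀ - bellmanOp P r γ π W s₀ := (bellmanOp_sub_bellmanOp ..).symm
      _ ≤ V s₀ - W s₀ := by
          rw [← Vval_eq_bellmanOp r (abs_lt.mpr ⟨by linarith, hγ1⟩) hP hπ]
          linarith [hW s₀]
  have hgap_nonneg : 0 ≤ V s₀ - W s₀ := by nlinarith
  linarith [hmin s (Finset.mem_univ s)]

end Bellman

section Augmented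

variable {S A : Type*} [Fintype A] [DecidableEq A]

theorem IsPolicy.mixed {πc : S → A → ℝ} (hπc : IsPolicy πc) {μ : S → A → ℝ}
    (hμ : ∀ s a, μ s a ∈ Set.Icc (0 : ℝ) 1) : IsPolicy (mixed μ πc) := by
  intro x
  obtain ⟨hμ0, hμ1⟩ := hμ x.1 x.2
  refine ⟨fun a => ?_, ?_⟩
  · have := (hπc x.1).1 a
    have : (0 : ℝ) ≤ if a = x.2 then 1 else 0 := by positivity
    simp only [_root_.mixed]
    nlinarith
  · simp [_root_.mixed, Finset.sum_add_distrib, ← Finset.mul_sum, (hπc x.1).2]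

variable [Fintype S]

theorem sum_augP_mul (P : S → A → S → ℝ) (x : S × A) (a : A) (g : S × A → ℝ) :
    ∑ y, augP P x a y * g y = ∑ s', P x.1 a s' * g (s', a) := by
  simp [augP, Fintype.sum_prod_type, ite_mul]

theorem IsKernel.augP {P : S → A → S → ℝ} (hP : IsKernel P) : IsKernel (augP P) := by
  intro x a
  refine ⟨fun y => ?_, ?_⟩
  · unfold _root_.augP
    split
    · exact (hP x.1 a).1 y.1
    · exact le_rfl
  · have := sum_augP_mul P x a fun _ => 1
    simp only [mul_one] at this
    rw [this, (hP x.1 a).2]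

theorem bellmanOp_augP_augR (P : S → A → S → ℝ) (r : S → A → ℝ) (γ : ℝ) (π : S × A → A → ℝ)
    (W : S × A → ℝ) (x : S × A) :
    bellmanOp (augP P) (augR r) γ π W x =
      ∑ a, π x a * (r x.1 a + γ * ∑ s', P x.1 a s' * W (s', a)) := by
  simp only [bellmanOp, sum_augP_mul, augR]

end Augmented

theorem augmented_policy_improvement_general
    {S A : Type*} [Fintype S] [Fintype A]
    [DecidableEq S] [DecidableEq A]
    (P : S → A → S → ℝ) (hP : IsKernel P)
    (r : S → A → ℝ) (γ : ℝ) (hγ0 : 0 ≤ γ) (hγ1 : γ < 1)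
    (πc : S → A → ℝ) (hπc : IsPolicy πc)
    (μ : S → A → ℝ) (hμ01 : ∀ s a, μ s a ∈ Set.Icc (0 : ℝ) 1)
    (hstep : ∀ (s : S) (a' : A),
      Vval P r γ πc s ≤ ∑ a : A, mixed μ πc (s, a') a * Qval P r γ πc s a) :
    ∀ (s : S) (a' : A),
      Vval P r γ πc s ≤ Vval (augP P) (augR r) γ (mixed μ πc) (s, a') := by
  have hγ : |γ| < 1 := abs_lt.mpr ⟨by linarith, hγ1⟩
  have hsub (x : S × A) : Vval P r γ πc x.1 ≤
      bellmanOp (augP P) (augR r) γ (mixed μ πc) (fun y => Vval P r γ πc y.1) x := by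
    rw [bellmanOp_augP_augR]
    simpa only [Qval_eq_reward_add r hγ hP hπc] using hstep x.1 x.2
  exact fun s a' =>
    le_Vval_of_le_bellmanOp (augR r) hγ0 hγ1 hP.augP (hπc.mixed hμ01) hsub (s, a')

/-- **Lemma (policy improvement on the augmented MDP).**
Let `πc` be a policy core and `π` the mixed policy built from `πc` and a
policy inertia controller `μ : S × A → [0,1]`. If for every state `s` and
previous action `a'` the one-step expected value satisfies
`E_{a ~ π(·|s,a')}[Q^{πc}(s,a)] ≥ V^{πc}(s)`, then the value of the mixed
policy on the augmented MDP dominates the value of the policy core: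
`V^π(s,a') ≥ V^{πc}(s)` for every state `s` and previous action `a'`. -/
theorem augmented_policy_improvement
    {S A : Type*} [Fintype S] [Fintype A] [Nonempty S] [Nonempty A]
    [DecidableEq S] [DecidableEq A]
    (P : S → A → S → ℝ) (hP : IsKernel P)
    (r : S → A → ℝ) (γ : ℝ) (hγ0 : 0 ≤ γ) (hγ1 : γ < 1)
    (πc : S → A → ℝ) (hπc : IsPolicy πc)
    (μ : S → A → ℝ) (hμ01 : ∀ s a, μ s a ∈ Set.Icc (0 : ℝ) 1)
    (hstep : ∀ (s : S) (a' : A),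
      Vval P r γ πc s ≤ ∑ a : A, mixed μ πc (s, a') a * Qval P r γ πc s a) :
    ∀ (s : S) (a' : A),
      Vval P r γ πc s ≤ Vval (augP P) (augR r) γ (mixed μ πc) (s, a') :=
  augmented_policy_improvement_general P hP r γ hγ0 hγ1 πc hπc μ hμ01 hstep

end
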